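/- arXiv:2409.17784 — 2 statements merged into one kernel-verified Lean document; each statement's English description precedes it below -/
import Mathlib

section
/- Let χ, χ' ∈ 𝔤* with χ(𝔫⁺) = χ'(𝔫⁺) = 0, λ ∈ Λ_χ and μ ∈ Λ_{χ'}, and write z_λ = 1⊗1 ∈ Z_χ(λ) and u_μ = 1⊗1 ∈ Z_{χ'}(μ). Then the U_{χ+χ'}(𝔤)-module Z_χ(λ) ⊗ Z_{χ'}(μ) has a 𝕂-basis consisting of the elements e_{−γ_D}^{c_D}⋯e_{−γ_1}^{c_1}·(z_λ ⊗ e_{−γ_D}^{d_D}⋯e_{−γ_1}^{d_1} u_μ) for 0 ≤ c_1,…,c_D, d_1,…,d_D < p. -/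
/-!
Each `e_{−γ}` acts on `Z_χ(λ) ⊗ Z_{χ'}(μ)` as `e_{−γ} ⊗ 1 + 1 ⊗ e_{−γ}`, and these two
summands commute, so by the binomial theorem the ordered monomial
`e_{−γ_D}^{c_D} ⋯ e_{−γ_1}^{c_1}` sends `z_λ ⊗ w` to `(e_{−γ_D}^{c_D} ⋯ e_{−γ_1}^{c_1} z_λ) ⊗ w`
plus terms `(e_{−γ_D}^{k_D} ⋯ e_{−γ_1}^{k_1} z_λ) ⊗ w'` with `k ≤ c` (so `k_r < p`) of
strictly smaller weight `∑ k_r ht(γ_r)`.  Induction on that weight shows that the proposed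
vectors span the tensor product; there are `p^{2D} = dim (Z_χ(λ) ⊗ Z_{χ'}(μ))` of them, so
they form a basis.
-/

universe u v

attribute [local instance] LieRing.ofAssociativeRing

/-- The Chevalley-type data attached to the Lie algebra `𝔤` of a reductive algebraic
group over `K` satisfying the standard hypotheses, in characteristic `p`:
a maximal torus part `𝔱`, nilradicals `𝔫⁺`, `𝔫⁻`, positive root vectors `e_{γ_r}`,
negative root vectors `e_{−γ_r}` (for the enumeration `Φ⁺ = {γ₁,…,γ_D}` with
non-decreasing heights), the restricted structure `x ↦ x^{[p]}`, and the roots as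
linear functionals on `𝔱`. -/
structure RootedLieAlgebra (K : Type u) [Field K] (p : ℕ) where
  /-- the Lie algebra `𝔤` -/
  g : Type v
  [lieRing : LieRing g]
  [lieAlg : LieAlgebra K g]
  /-- the restricted structure `x ↦ x^{[p]}` -/
  pow : g → g
  /-- the Cartan subalgebra `𝔱 = Lie T` -/
  t : LieSubalgebra K g
  /-- `𝔫⁺ = ⊕_{α ∈ Φ⁺} 𝔤_α` -/
  nplus : LieSubalgebra K g
  /-- `𝔫⁻ = ⊕_{α ∈ Φ⁺} 𝔤_{−α}` -/
  nminus : LieSubalgebra K g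
  /-- the number `D` of positive roots -/
  D : ℕ
  /-- the heights `ht γ_r` of the positive roots -/
  ht : Fin D → ℕ
  ht_pos : ∀ r, 0 < ht r
  /-- the enumeration is chosen so that `r < l` implies `ht γ_r ≤ ht γ_l` -/
  ht_mono : Monotone ht
  /-- positive root vectors `e_{γ_r}` -/
  epos : Fin D → g
  /-- negative root vectors `e_{−γ_r}` -/
  eneg : Fin D → g
  epos_mem : ∀ r, epos r ∈ nplus
  eneg_mem : ∀ r, eneg r ∈ nminus
  epos_span : nplus.toSubmodule = Submodule.span K (Set.range epos)
  eneg_span : nminus.toSubmodule = Submodule.span K (Set.range eneg)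
  /-- the restricted structure preserves `𝔱` -/
  powT : t → t
  powT_coe : ∀ h : t, (powT h : g) = pow (h : g)
  pow_epos : ∀ r, pow (epos r) = 0
  pow_eneg : ∀ r, pow (eneg r) = 0
  /-- the positive roots `γ_r`, as linear functionals on `𝔱` -/
  root : Fin D → Module.Dual K t
  bracket_epos : ∀ (h : t) (r : Fin D), ⁅(h : g), epos r⁆ = root r h • epos r
  bracket_eneg : ∀ (h : t) (r : Fin D), ⁅(h : g), eneg r⁆ = -(root r h) • eneg r

attribute [instance] RootedLieAlgebra.lieRing RootedLieAlgebra.lieAlg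

namespace RootedLieAlgebra

variable {K : Type u} [Field K] {p : ℕ}

/-- A representation of `𝔤` on a `K`-vector space. -/
structure Rep (𝔇 : RootedLieAlgebra.{u, v} K p) where
  M : Type v
  [isAddCommGroup : AddCommGroup M]
  [isModule : Module K M]
  act : 𝔇.g →ₗ⁅K⁆ Module.End K M

attribute [instance] Rep.isAddCommGroup Rep.isModule

variable {𝔇 : RootedLieAlgebra.{u, v} K p}

/-- `ρ` is a module over the reduced enveloping algebra `U_χ(𝔤)`, i.e.
`x^p − x^{[p]}` acts by the scalar `χ(x)^p`. -/
def Rep.IsReduced (ρ : 𝔇.Rep) (χ : Module.Dual K 𝔇.g) : Prop :=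
  ∀ x : 𝔇.g, ρ.act x ^ p = ρ.act (𝔇.pow x) + χ x ^ p • (1 : Module.End K ρ.M)

/-- `λ ∈ Λ_χ`, i.e. `λ(h)^p − λ(h^{[p]}) = χ(h)^p` for all `h ∈ 𝔱`. -/
def InLambda (χ : Module.Dual K 𝔇.g) (lam : Module.Dual K 𝔇.t) : Prop :=
  ∀ h : 𝔇.t, lam h ^ p - lam (𝔇.powT h) = χ (h : 𝔇.g) ^ p

/-- The monomial operator `e_{−γ_D}^{a_D} ⋯ e_{−γ_1}^{a_1}` acting on `ρ`. -/
def lowerMon (ρ : 𝔇.Rep) (a : Fin 𝔇.D → ℕ) : Module.End K ρ.M :=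
  ((List.finRange 𝔇.D).reverse.map fun r => ρ.act (𝔇.eneg r) ^ a r).prod

/-- `ρ`, with generator `z`, is the baby Verma module `Z_χ(λ)`: a `U_χ(𝔤)`-module with
highest-weight generator `z = z_λ` (killed by `𝔫⁺`, with `𝔱` acting via `λ`) such that
the monomials `e_{−γ_D}^{a_D} ⋯ e_{−γ_1}^{a_1} z_λ` with `0 ≤ a_i < p` form a basis. -/
structure Rep.IsBabyVerma (ρ : 𝔇.Rep) (χ : Module.Dual K 𝔇.g)
    (lam : Module.Dual K 𝔇.t) (z : ρ.M) : Prop where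
  reduced : ρ.IsReduced χ
  hw_nplus : ∀ x ∈ 𝔇.nplus, ρ.act x z = 0
  hw_t : ∀ h : 𝔇.t, ρ.act (h : 𝔇.g) z = lam h • z
  monomial_basis : ∃ b : Module.Basis (Fin 𝔇.D → Fin p) K ρ.M,
    ∀ a, b a = lowerMon ρ (fun r => (a r : ℕ)) z

/-- The height `ht(e_{−γ_D}^{a_D} ⋯ e_{−γ_1}^{a_1} z_λ) = −∑ a_r · ht(γ_r)`. -/
def htMon (𝔇 : RootedLieAlgebra.{u, v} K p) (a : Fin 𝔇.D → Fin p) : ℤ :=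
  -∑ r, ((a r : ℕ) : ℤ) * (𝔇.ht r : ℤ)

/-- `V_{≥ n}`: the span of the monomial basis vectors of height at least `n`. -/
def Vge (ρ : 𝔇.Rep) (z : ρ.M) (n : ℤ) : Submodule K ρ.M :=
  Submodule.span K
    {v | ∃ a : Fin 𝔇.D → Fin p, n ≤ htMon 𝔇 a ∧ v = lowerMon ρ (fun r => (a r : ℕ)) z}

end RootedLieAlgebra

open RootedLieAlgebra

open scoped TensorProduct

namespace RootedLieAlgebra

variable {K : Type u} [Field K] {p : ℕ} {𝔇 : RootedLieAlgebra.{u, v} K p}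

/-- The ordered monomial `f_D^{a_D} ∘ ⋯ ∘ f_1^{a_1}` built from a family of
endomorphisms indexed by the positive roots. -/
def endMon {M : Type v} [AddCommGroup M] [Module K M] (D : ℕ)
    (f : Fin D → Module.End K M) (a : Fin D → ℕ) : Module.End K M :=
  ((List.finRange D).reverse.map fun r => f r ^ a r).prod

/-- The action of `x ∈ 𝔤` on the tensor product `M ⊗ N` of a `U_χ(𝔤)`-module and a
`U_{χ'}(𝔤)`-module: `x·(m⊗n) = (x·m)⊗n + m⊗(x·n)`.  This makes `M ⊗ N` a
`U_{χ+χ'}(𝔤)`-module. -/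
noncomputable def tensAct (ρ ρ' : 𝔇.Rep) (x : 𝔇.g) : Module.End K (ρ.M ⊗[K] ρ'.M) :=
  LinearMap.rTensor ρ'.M (ρ.act x) + LinearMap.lTensor ρ.M (ρ'.act x)

end RootedLieAlgebra

theorem Module.End.rTensor_add_lTensor_pow_apply_tmul {R M N : Type*} [CommSemiring R]
    [AddCommMonoid M] [Module R M] [AddCommMonoid N] [Module R N]
    (f : Module.End R M) (g : Module.End R N) (n : ℕ) (x : M) (y : N) :
    ((f.rTensor N + g.lTensor M) ^ n) (x ⊗ₜ[R] y) =
      ∑ j ∈ Finset.range (n + 1), n.choose j • ((f ^ j) x ⊗ₜ[R] (g ^ (n - j)) y) := by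
  have hcomm : Commute (f.rTensor N) (g.lTensor M) := by
    rw [commute_iff_eq, Module.End.mul_eq_comp, Module.End.mul_eq_comp,
      LinearMap.rTensor_comp_lTensor, LinearMap.lTensor_comp_rTensor]
  rw [hcomm.add_pow, LinearMap.sum_apply]
  refine Finset.sum_congr rfl fun j _ => ?_
  rw [Module.End.mul_apply, Module.End.mul_apply, Module.End.natCast_apply, map_nsmul,
    map_nsmul, LinearMap.lTensor_pow, LinearMap.rTensor_pow, LinearMap.lTensor_tmul,
    LinearMap.rTensor_tmul]

namespace RootedLieAlgebra

section ListMonomials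

variable {R M N ι : Type*} [CommRing R] [AddCommGroup M] [Module R M] [AddCommGroup N]
  [Module R N]

def listMon (L : List ι) (f : ι → Module.End R M) (a : ι → ℕ) : Module.End R M :=
  (L.map fun r => f r ^ a r).prod

def listWeight (L : List ι) (ht : ι → ℕ) (a : ι → ℕ) : ℕ :=
  (L.map fun r => a r * ht r).sum

def tensorEnd (f : ι → Module.End R M) (g : ι → Module.End R N) (r : ι) :
    Module.End R (M ⊗[R] N) :=
  (f r).rTensor N + (g r).lTensor M

def lowerSpan (N : Type*) [AddCommGroup N] [Module R N] (f : ι → Module.End R M) (ht : ι → ℕ)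
    (L : List ι) (z : M) (a : ι → ℕ) : Submodule R (M ⊗[R] N) :=
  Submodule.span R {x | ∃ k ≤ a, ∃ w : N, listWeight L ht k < listWeight L ht a ∧
    x = listMon L f k z ⊗ₜ[R] w}

variable {L : List ι} {r : ι} {f : ι → Module.End R M} {g : ι → Module.End R N} {ht : ι → ℕ}

theorem listMon_cons (r : ι) (L : List ι) (f : ι → Module.End R M) (a : ι → ℕ) :
    listMon (r :: L) f a = f r ^ a r * listMon L f a :=
  rfl

theorem listWeight_cons (r : ι) (L : List ι) (ht a : ι → ℕ) :
    listWeight (r :: L) ht a = a r * ht r + listWeight L ht a :=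
  rfl

variable [DecidableEq ι]

theorem listMon_cons_update (hr : r ∉ L) (k : ι → ℕ) (j : ℕ) :
    listMon (r :: L) f (Function.update k r j) = f r ^ j * listMon L f k := by
  have hL : ∀ s ∈ L, Function.update k r j s = k s := fun s hs =>
    Function.update_of_ne (by rintro rfl; exact hr hs) _ _
  simp only [listMon, List.map_cons, List.prod_cons, Function.update_self,
    List.map_congr_left fun s hs => congrArg (f s ^ ·) (hL s hs)]

theorem listWeight_cons_update (hr : r ∉ L) (k : ι → ℕ) (j : ℕ) :
    listWeight (r :: L) ht (Function.update k r j) = j * ht r + listWeight L ht k := by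
  have hL : ∀ s ∈ L, Function.update k r j s = k s := fun s hs =>
    Function.update_of_ne (by rintro rfl; exact hr hs) _ _
  simp only [listWeight, List.map_cons, List.sum_cons, Function.update_self,
    List.map_congr_left fun s hs => congrArg (· * ht s) (hL s hs)]

variable {z : M} {a : ι → ℕ}

theorem pow_apply_tmul_mem_lowerSpan_cons (hr : r ∉ L) {k : ι → ℕ} {j : ℕ} (hj : j ≤ a r)
    (hk : k ≤ a) (hwt : j * ht r + listWeight L ht k < listWeight (r :: L) ht a) (w : N) :
    (f r ^ j) (listMon L f k z) ⊗ₜ[R] w ∈ lowerSpan N f ht (r :: L) z a := by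
  refine Submodule.subset_span ⟨Function.update k r j, ?_, w, ?_, ?_⟩
  · exact update_le_iff.mpr ⟨hj, fun s _ => hk s⟩
  · rwa [listWeight_cons_update hr]
  · rw [listMon_cons_update hr, Module.End.mul_apply]

theorem map_lowerSpan_le_lowerSpan_cons (hr : r ∉ L) :
    (lowerSpan N f ht L z a).map (tensorEnd f g r ^ a r) ≤ lowerSpan N f ht (r :: L) z a := by
  rw [lowerSpan, Submodule.map_span, Submodule.span_le]
  rintro _ ⟨_, ⟨k, hk, w, hwt, rfl⟩, rfl⟩
  rw [tensorEnd, Module.End.rTensor_add_lTensor_pow_apply_tmul]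
  refine Submodule.sum_mem _ fun j hj => Submodule.smul_of_tower_mem _ _ ?_
  have hj : j ≤ a r := Nat.lt_succ_iff.mp (Finset.mem_range.mp hj)
  refine pow_apply_tmul_mem_lowerSpan_cons hr hj hk ?_ _
  rw [listWeight_cons]
  exact Nat.add_lt_add_of_le_of_lt (Nat.mul_le_mul_right _ hj) hwt

theorem listMon_tensorEnd_apply_tmul_sub_mem_lowerSpan (hht : ∀ r, 0 < ht r) (hL : L.Nodup)
    (a : ι → ℕ) (w : N) :
    listMon L (tensorEnd f g) a (z ⊗ₜ[R] w) - listMon L f a z ⊗ₜ[R] w ∈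
      lowerSpan N f ht L z a := by
  induction L with
  | nil => simp [listMon]
  | cons r L ih =>
    obtain ⟨hr, hL⟩ := List.nodup_cons.mp hL
    set m := listMon L f a z
    set e := listMon L (tensorEnd f g) a (z ⊗ₜ[R] w) - m ⊗ₜ[R] w
    have hhead : (tensorEnd f g r ^ a r) (m ⊗ₜ[R] w) =
        (∑ j ∈ Finset.range (a r), (a r).choose j •
          ((f r ^ j) m ⊗ₜ[R] (g r ^ (a r - j)) w)) + (f r ^ a r) m ⊗ₜ[R] w := by
      rw [tensorEnd, Module.End.rTensor_add_lTensor_pow_apply_tmul, Finset.sum_range_succ,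
        Nat.choose_self, Nat.sub_self, pow_zero, Module.End.one_apply, one_smul]
    have hsplit : listMon (r :: L) (tensorEnd f g) a (z ⊗ₜ[R] w) -
        listMon (r :: L) f a z ⊗ₜ[R] w =
        (∑ j ∈ Finset.range (a r), (a r).choose j •
          ((f r ^ j) m ⊗ₜ[R] (g r ^ (a r - j)) w)) + (tensorEnd f g r ^ a r) e := by
      have hcons : listMon (r :: L) (tensorEnd f g) a (z ⊗ₜ[R] w) =
          (tensorEnd f g r ^ a r) (m ⊗ₜ[R] w + e) := by
        rw [add_sub_cancel]; rfl
      rw [hcons, map_add, hhead, listMon_cons, Module.End.mul_apply]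
      abel
    rw [hsplit]
    refine Submodule.add_mem _ (Submodule.sum_mem _ fun j hj => ?_) <|
      map_lowerSpan_le_lowerSpan_cons hr (Submodule.mem_map_of_mem (ih hL))
    have hj : j < a r := Finset.mem_range.mp hj
    refine Submodule.smul_of_tower_mem _ _ <|
      pow_apply_tmul_mem_lowerSpan_cons hr hj.le le_rfl ?_ _
    rw [listWeight_cons]
    exact Nat.add_lt_add_right (Nat.mul_lt_mul_of_pos_right hj (hht r)) _

theorem tmul_mem_span_listMon_tensorEnd {κ : Type*} {p : ℕ} (bN : Module.Basis κ R N)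
    (hht : ∀ r, 0 < ht r) (hL : L.Nodup) (c : ι → Fin p) (w : N) :
    listMon L f (fun r => c r) z ⊗ₜ[R] w ∈ Submodule.span R (Set.range
      fun cd : (ι → Fin p) × κ =>
        listMon L (tensorEnd f g) (fun r => cd.1 r) (z ⊗ₜ[R] bN cd.2)) := by
  set V := Submodule.span R (Set.range fun cd : (ι → Fin p) × κ =>
    listMon L (tensorEnd f g) (fun r => cd.1 r) (z ⊗ₜ[R] bN cd.2))
  induction hn : listWeight L ht (fun r => (c r : ℕ)) using Nat.strong_induction_on
    generalizing c w with
  | _ n ih =>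
  suffices hbasis : ∀ d, listMon L f (fun r => c r) z ⊗ₜ[R] bN d ∈ V by
    have hle : Submodule.span R (Set.range bN) ≤
        V.comap (TensorProduct.mk R M N (listMon L f (fun r => c r) z)) :=
      Submodule.span_le.mpr fun _ ⟨d, hd⟩ => hd ▸ hbasis d
    exact hle (bN.span_eq ▸ Submodule.mem_top)
  intro d
  have hlower : lowerSpan N f ht L z (fun r => c r) ≤ V := by
    refine Submodule.span_le.mpr ?_
    rintro _ ⟨k, hk, w', hwt, rfl⟩
    exact ih _ (hn ▸ hwt) (fun r => ⟨k r, (hk r).trans_lt (c r).isLt⟩) w' rfl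
  rw [← sub_sub_cancel (listMon L (tensorEnd f g) (fun r => c r) (z ⊗ₜ[R] bN d))
    (listMon L f (fun r => c r) z ⊗ₜ[R] bN d)]
  exact V.sub_mem (Submodule.subset_span ⟨(c, d), rfl⟩)
    (hlower (listMon_tensorEnd_apply_tmul_sub_mem_lowerSpan hht hL _ _))

end ListMonomials

section

variable {K M N ι : Type*} [Field K] [AddCommGroup M] [Module K M] [AddCommGroup N]
  [Module K N] [DecidableEq ι] {L : List ι} {f : ι → Module.End K M}
  {g : ι → Module.End K N} {ht : ι → ℕ} {z : M}

theorem exists_basis_listMon_tensorEnd {κ : Type*} {p : ℕ} [Fintype ι] [Fintype κ]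
    (hht : ∀ r, 0 < ht r) (hL : L.Nodup) (bM : Module.Basis (ι → Fin p) K M)
    (hbM : ∀ a, bM a = listMon L f (fun r => a r) z) (bN : Module.Basis κ K N) :
    ∃ B : Module.Basis ((ι → Fin p) × κ) K (M ⊗[K] N), ∀ cd,
      B cd = listMon L (tensorEnd f g) (fun r => cd.1 r) (z ⊗ₜ[K] bN cd.2) := by
  have : Module.Finite K M := .of_basis bM
  have : Module.Finite K N := .of_basis bN
  set v := fun cd : (ι → Fin p) × κ =>
    listMon L (tensorEnd f g) (fun r => cd.1 r) (z ⊗ₜ[K] bN cd.2)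
  have hspan : ⊤ ≤ Submodule.span K (Set.range v) := by
    rw [← (bM.tensorProduct bN).span_eq, Submodule.span_le]
    rintro _ ⟨cd, rfl⟩
    rw [Module.Basis.tensorProduct_apply', hbM]
    exact tmul_mem_span_listMon_tensorEnd bN hht hL cd.1 (bN cd.2)
  have hcard : Fintype.card ((ι → Fin p) × κ) = Module.finrank K (M ⊗[K] N) := by
    rw [Module.finrank_tensorProduct, Module.finrank_eq_card_basis bM,
      Module.finrank_eq_card_basis bN, Fintype.card_prod]
  exact ⟨basisOfTopLeSpanOfCardEqFinrank v hspan hcard,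
    congrFun (coe_basisOfTopLeSpanOfCardEqFinrank v hspan hcard)⟩

end

end RootedLieAlgebra

theorem statement3_general {K : Type u} [Field K] {p : ℕ} (𝔇 : RootedLieAlgebra.{u, v} K p)
    (χ χ' : Module.Dual K 𝔇.g)
    (lam mu : Module.Dual K 𝔇.t)
    (ρ ρ' : 𝔇.Rep) (z : ρ.M) (u : ρ'.M)
    (hz : ρ.IsBabyVerma χ lam z) (hu : ρ'.IsBabyVerma χ' mu u) :
    ∃ B : Module.Basis ((Fin 𝔇.D → Fin p) × (Fin 𝔇.D → Fin p)) K (ρ.M ⊗[K] ρ'.M),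
      ∀ cd : (Fin 𝔇.D → Fin p) × (Fin 𝔇.D → Fin p),
        B cd = endMon 𝔇.D (fun r => tensAct ρ ρ' (𝔇.eneg r)) (fun r => (cd.1 r : ℕ))
          (z ⊗ₜ[K] (lowerMon ρ' (fun r => (cd.2 r : ℕ)) u)) := by
  obtain ⟨b, hb⟩ := hz.monomial_basis
  obtain ⟨b', hb'⟩ := hu.monomial_basis
  obtain ⟨B, hB⟩ := exists_basis_listMon_tensorEnd (L := (List.finRange 𝔇.D).reverse)
    (f := fun r => ρ.act (𝔇.eneg r)) (g := fun r => ρ'.act (𝔇.eneg r))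
    𝔇.ht_pos (List.nodup_reverse.mpr (List.nodup_finRange 𝔇.D)) b hb b'
  exact ⟨B, fun cd => (hB cd).trans (by rw [hb']; rfl)⟩

/-- Lemma 2.6: the elements
`e_{−γ_D}^{c_D} ⋯ e_{−γ_1}^{c_1} (z_λ ⊗ e_{−γ_D}^{d_D} ⋯ e_{−γ_1}^{d_1} u_μ)`,
`0 ≤ c_i, d_i < p`, form a `𝕂`-basis of `Z_χ(λ) ⊗ Z_{χ'}(μ)` (where `e_{−γ_r}` acts on
the tensor product by the `U_{χ+χ'}(𝔤)`-module structure). -/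
theorem statement3 {K : Type u} [Field K] [IsAlgClosed K] {p : ℕ} [Fact p.Prime]
    [CharP K p] (𝔇 : RootedLieAlgebra.{u, v} K p)
    (χ χ' : Module.Dual K 𝔇.g)
    (hχ : ∀ x ∈ 𝔇.nplus, χ x = 0) (hχ' : ∀ x ∈ 𝔇.nplus, χ' x = 0)
    (lam mu : Module.Dual K 𝔇.t) (hlam : InLambda χ lam) (hmu : InLambda χ' mu)
    (ρ ρ' : 𝔇.Rep) (z : ρ.M) (u : ρ'.M)
    (hz : ρ.IsBabyVerma χ lam z) (hu : ρ'.IsBabyVerma χ' mu u) :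
    ∃ B : Module.Basis ((Fin 𝔇.D → Fin p) × (Fin 𝔇.D → Fin p)) K (ρ.M ⊗[K] ρ'.M),
      ∀ cd : (Fin 𝔇.D → Fin p) × (Fin 𝔇.D → Fin p),
        B cd = endMon 𝔇.D (fun r => tensAct ρ ρ' (𝔇.eneg r)) (fun r => (cd.1 r : ℕ))
          (z ⊗ₜ[K] (lowerMon ρ' (fun r => (cd.2 r : ℕ)) u)) :=
  statement3_general 𝔇 χ χ' lam mu ρ ρ' z u hz hu
end

section
/- Let λ ∈ 𝔱_R* and assume (R2(λ)) holds. If χ : 𝔤_R → R is an R-linear map such that χ, viewed as an element of 𝔤_ℂ*, lies in 𝒱_{𝔤_ℂ} L_ℂ(λ), then χ ⊗ 1 ∈ 𝔤_𝕂* lies in 𝒱_{𝔤_𝕂} L_p(λ). -/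
/-!
Statement 13 (Proposition 3.7).  Let `𝔤_ℂ` be a simple complex Lie algebra with
Chevalley basis `ℬ = (b_1, …, b_k)` (structure constants in `R`), `R = 𝒮⁻¹ℤ` a
localisation of `ℤ` (encoded as a subring of `ℚ`) in which the prime `p` is not
invertible, `𝕂` algebraically closed of characteristic `p`, `𝔤_R` the `R`-span of `ℬ`
and `𝔤_𝕂 = 𝔤_R ⊗_R 𝕂`.  Let `λ ∈ 𝔱_R*`, `L_ℂ(λ)` the simple highest weight module with
highest weight vector `v̄_λ`, `L_R(λ) = U(𝔤_R)v̄_λ` and `L_p(λ) = L_R(λ) ⊗_R 𝕂` (the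
latter encoded by its generator `w̄_λ` together with the conditions that the PBW
monomials span and that the `𝕂`-linear relations among them are spanned by the
reductions of the `R`-linear relations in `L_R(λ)`).  Assume (R2(λ)):
`S(𝔤_R)/Ann_{S(𝔤_R)}(v̄_λ)` has no `R`-torsion.

Claim: if the `R`-linear map `χ : 𝔤_R → R` (given by its values `χ i` on the basis)
lies, as an element of `𝔤_ℂ*`, in `𝒱_{𝔤_ℂ} L_ℂ(λ)`, then `χ ⊗ 1 ∈ 𝔤_𝕂*` lies in
`𝒱_{𝔤_𝕂} L_p(λ)`.  Associated varieties are zero loci of the annihilators of the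
highest-weight generator in the associated graded module, expressed in the coordinates
attached to the basis `ℬ`.
-/


open Matrix

universe v

/-- The ordered PBW monomial `∏ f_i^{m i}` (product taken in the fixed linear order on
`ι`) built from a family of endomorphisms indexed by a basis of the Lie algebra; under
the PBW theorem these monomials applied to a cyclic vector span the module, and they
realize the identification `gr U(𝔤) ≅ S(𝔤)`. -/
noncomputable def monAct {F : Type} [Field F] {M : Type v} [AddCommGroup M] [Module F M]
    {ι : Type} [Fintype ι] [LinearOrder ι]
    (f : ι → Module.End F M) (m : ι →₀ ℕ) : Module.End F M :=
  ((Finset.univ.sort (· ≤ ·)).map fun i => f i ^ m i).prod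

/-- `filtLow f v n = L_{n-1}`, the `(n-1)`-st piece of the filtration
`L_n = U_n(𝔤)·v` induced by the PBW filtration (with `L_{-1} = 0`). -/
noncomputable def filtLow {F : Type} [Field F] {M : Type v} [AddCommGroup M] [Module F M]
    {ι : Type} [Fintype ι] [LinearOrder ι]
    (f : ι → Module.End F M) (v : M) : ℕ → Submodule F M
  | 0 => ⊥
  | n + 1 => Submodule.span F
      {u | ∃ m : ι →₀ ℕ, (m.sum fun _ e => e) ≤ n ∧ u = monAct f m v}

/-- `s ∈ Ann_{S(𝔤)}(v̄)`: the polynomial `s ∈ S(𝔤) ≅ MvPolynomial ι F` annihilates the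
class of the cyclic vector `v` in the associated graded module `gr L`: for every `n`,
the degree-`n` part of `s`, applied to `v` (via the PBW monomials), lies in `L_{n-1}`. -/
def annMem {F : Type} [Field F] {M : Type v} [AddCommGroup M] [Module F M]
    {ι : Type} [Fintype ι] [LinearOrder ι]
    (f : ι → Module.End F M) (v : M) (s : MvPolynomial ι F) : Prop :=
  ∀ n : ℕ,
    (∑ m ∈ s.support.filter (fun m => (m.sum fun _ e => e) = n),
      s.coeff m • (monAct f m v)) ∈ filtLow f v n

/-- the embedding `R ⊆ ℚ ⊆ ℂ` for a subring `R` of `ℚ` (every localisation of `ℤ` at a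
set of primes arises as such a subring). -/
noncomputable def ratToC {R : Subring ℚ} (cR : R) : ℂ := ((cR : ℚ) : ℂ)

/-- the R-form filtration `L_{R,n} = U_n(𝔤_R)·v̄` inside `L_ℂ(λ)`, as an additive
subgroup (shifted: `filtRLow R f v n = L_{R,n-1}`, with `L_{R,-1} = 0`). -/
noncomputable def filtRLow (R : Subring ℚ) {M : Type v} [AddCommGroup M] [Module ℂ M]
    {ι : Type} [Fintype ι] [LinearOrder ι]
    (f : ι → Module.End ℂ M) (v : M) : ℕ → AddSubgroup M
  | 0 => ⊥
  | n + 1 => AddSubgroup.closure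
      {u | ∃ (cR : R) (m : ι →₀ ℕ), (m.sum fun _ e => e) ≤ n ∧
        u = ratToC cR • monAct f m v}

/-- `s ∈ Ann_{S(𝔤_R)}(v̄)` for `s ∈ S(𝔤_R) ≅ MvPolynomial ι R`: each homogeneous
component, applied to `v̄`, drops in the `R`-form filtration. -/
def annMemR (R : Subring ℚ) {M : Type v} [AddCommGroup M] [Module ℂ M]
    {ι : Type} [Fintype ι] [LinearOrder ι]
    (f : ι → Module.End ℂ M) (v : M) (s : MvPolynomial ι R) : Prop :=
  ∀ n : ℕ,
    (∑ m ∈ s.support.filter (fun m => (m.sum fun _ e => e) = n),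
      ratToC (s.coeff m) • monAct f m v) ∈ filtRLow R f v n

/-!
The degree-`n` layer `sₙ` of an annihilating `s` acts on `w̄` like an element `d` of lower
degree, so `sₙ - d` is a `𝕂`-relation among PBW monomials of degree `≤ n`; by base change it is
a `𝕂`-combination of reductions of `R`-relations. Reductions have coordinates in `𝔽_p`, so
expanding the `𝕂`-coefficients in an `𝔽_p`-basis of `𝕂` rewrites `sₙ - d` as a combination of
reductions that themselves have degree `≤ n`. By (R2) each of these lifts to an `R`-relation of
degree `≤ n`: a top layer vanishing mod `p` is `p` times an element of the annihilator, so it can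
be traded for terms of lower degree. Finally the top layer of an `R`-relation of degree `≤ n`
annihilates `v̄` in `gr L_ℂ(λ)`, hence vanishes at `χ`, and evaluating degree-`n` layers at
`χ ⊗ 1` kills `sₙ`.
-/

open Finsupp

namespace Subring

variable (R : Subring ℚ)

theorem inv_den_mem {x : ℚ} (hx : x ∈ R) : (x.den : ℚ)⁻¹ ∈ R := by
  obtain ⟨u, w, huw⟩ : IsCoprime x.num (x.den : ℤ) :=
    Int.isCoprime_iff_gcd_eq_one.mpr x.reduced
  have key : (u * x + w) * x.den = 1 := by
    rw [add_mul, mul_assoc, Rat.mul_den_eq_num]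
    exact_mod_cast huw
  rw [← eq_inv_of_mul_eq_one_left key]
  exact add_mem (mul_mem (intCast_mem _ _) hx) (intCast_mem _ _)

theorem not_dvd_den {p : ℕ} (hpR : ¬IsUnit (p : R)) (x : R) : ¬p ∣ (x : ℚ).den := by
  rintro ⟨k, hk⟩
  have hden : ((x : ℚ).den : ℚ) ≠ 0 := by positivity
  refine hpR (IsUnit.of_mul_eq_one (⟨k * ((x : ℚ).den : ℚ)⁻¹,
    mul_mem (natCast_mem _ _) (R.inv_den_mem x.2)⟩ : R) (Subtype.ext ?_))
  have hk' : ((x : ℚ).den : ℚ) = p * k := by exact_mod_cast hk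
  simp only [MulMemClass.coe_mul, SubringClass.coe_natCast, OneMemClass.coe_one]
  rw [hk'] at hden ⊢
  have := left_ne_zero_of_mul hden
  have := right_ne_zero_of_mul hden
  field_simp

end Subring

section ReductionModP

variable {K : Type*} [Field K] {p : ℕ} [CharP K p] {R : Subring ℚ}

theorem map_mul_den (φ : R →+* K) (x : R) : φ x * ((x : ℚ).den : K) = (x : ℚ).num := by
  have h : x * ((x : ℚ).den : R) = ((x : ℚ).num : R) :=
    Subtype.ext (by push_cast; exact Rat.mul_den_eq_num _)
  simpa using congrArg φ h

theorem natCast_den_ne_zero (hpR : ¬IsUnit (p : R)) (x : R) : ((x : ℚ).den : K) ≠ 0 := fun h =>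
  R.not_dvd_den hpR x ((CharP.cast_eq_zero_iff K p _).mp h)

theorem map_mem_range_algebraMap [Fact p.Prime] [Algebra (ZMod p) K] (hpR : ¬IsUnit (p : R))
    (φ : R →+* K) (x : R) : φ x ∈ (algebraMap (ZMod p) K).range :=
  ⟨((x : ℚ).num : ZMod p) / ((x : ℚ).den : ZMod p), by
    rw [map_div₀, map_intCast, map_natCast, div_eq_iff (natCast_den_ne_zero hpR x), map_mul_den]⟩

theorem exists_eq_mul_of_map_eq_zero (φ : R →+* K) {x : R} (hx : φ x = 0) :
    ∃ y : R, x = p * y := by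
  have hnum : ((x : ℚ).num : K) = 0 := by rw [← map_mul_den φ, hx, zero_mul]
  obtain ⟨a, ha⟩ := (CharP.intCast_eq_zero_iff K p _).mp hnum
  refine ⟨⟨a * ((x : ℚ).den : ℚ)⁻¹, mul_mem (intCast_mem _ _) (R.inv_den_mem x.2)⟩,
    Subtype.ext ?_⟩
  have hden : ((x : ℚ).den : ℚ) ≠ 0 := by positivity
  conv_lhs => rw [← Rat.num_div_den (x : ℚ)]
  push_cast [ha]
  field_simp

theorem mapRange_natCast_smul_eq_zero {X : Type*} (φ : R →+* K) (z : X →₀ R) :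
    ((p : R) • z).mapRange φ (map_zero φ) = 0 := by
  ext m
  simp

end ReductionModP

/-- The `t`-th coordinate projections `π t` for an `F`-basis of `K`, applied coordinatewise, map
`span K Φ` into `Φ` (because `Φ` has coordinates in `F`) and preserve supports, while
`D = ∑ t, B t • π t D`. -/
theorem Finsupp.mem_span_supported_of_mem_span {F K X : Type*} [Field F] [Field K] [Algebra F K]
    (Φ : Submodule F (X →₀ K)) (hΦ : ∀ x ∈ Φ, ∀ m, x m ∈ (algebraMap F K).range) {s : Set X}
    {D : X →₀ K} (hD : D ∈ Submodule.span K (Φ : Set (X →₀ K))) (hDs : D ∈ supported K K s) :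
    D ∈ Submodule.span K {x | x ∈ Φ ∧ x ∈ supported K K s} := by
  classical
  set B := Module.Basis.ofVectorSpace F K
  let π (t) : (X →₀ K) →ₗ[F] (X →₀ K) := mapRange.linearMap (Algebra.linearMap F K ∘ₗ B.coord t)
  have hπ_apply (t) (x : X →₀ K) (m) : π t x m = algebraMap F K (B.coord t (x m)) := rfl
  -- quantifying over `a` makes the claim stable under `K`-scalars, as span induction requires
  have hπΦ (t) : ∀ D ∈ Submodule.span K (Φ : Set (X →₀ K)), ∀ a : K, π t (a • D) ∈ Φ := by
    intro D hD
    induction hD using Submodule.span_induction with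
    | mem x hx =>
      intro a
      convert Φ.smul_mem (B.coord t a) hx using 1
      ext m
      obtain ⟨z, hz⟩ := hΦ x hx m
      rw [hπ_apply, Finsupp.smul_apply, Finsupp.smul_apply, ← hz, smul_eq_mul, mul_comm,
        ← Algebra.smul_def, map_smul, smul_eq_mul, map_mul, Algebra.smul_def, mul_comm]
    | zero => simp
    | add x y _ _ hx hy => exact fun a => by rw [smul_add, map_add]; exact add_mem (hx a) (hy a)
    | smul c x _ hx => exact fun a => by rw [smul_smul]; exact hx _
  have hπs (t) : π t D ∈ supported K K s := by
    rw [mem_supported'] at hDs ⊢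
    intro m hm
    rw [hπ_apply, hDs m hm, map_zero, map_zero]
  set T := D.support.biUnion fun m => (B.repr (D m)).support
  have hdecomp : D = ∑ t ∈ T, B t • π t D := by
    ext m
    have hsub : (B.repr (D m)).support ⊆ T := by
      by_cases hm : m ∈ D.support
      · exact Finset.subset_biUnion_of_mem (fun m => (B.repr (D m)).support) hm
      · simp [notMem_support_iff.mp hm]
    conv_lhs => rw [← B.linearCombination_repr (D m), linearCombination_apply,
      sum_of_support_subset _ hsub _ (fun t _ => zero_smul F (B t))]
    rw [finsetSum_apply]
    refine Finset.sum_congr rfl fun t _ => ?_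
    rw [Finsupp.smul_apply, hπ_apply, smul_eq_mul, mul_comm, ← Algebra.smul_def]
    rfl
  rw [hdecomp]
  refine Submodule.sum_mem _ fun t _ => Submodule.smul_mem _ _ (Submodule.subset_span ?_)
  exact ⟨by simpa using hπΦ t D hD 1, hπs t⟩

theorem Finsupp.exists_eq_smul_of_forall_dvd {X A : Type*} [Semiring A] {a : A} {x : X →₀ A}
    (h : ∀ m, a ∣ x m) : ∃ u : X →₀ A, x = a • u := by
  classical
  choose y hy using h
  refine ⟨onFinset x.support (fun m => if x m = 0 then 0 else y m) fun m hm => ?_, ext fun m => ?_⟩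
  · exact mem_support_iff.mpr fun h0 => hm (if_pos h0)
  · rw [Finsupp.smul_apply, onFinset_apply, smul_eq_mul]
    split_ifs with h0
    · rw [h0, mul_zero]
    · exact hy m

section LayerEval

variable {σ A B : Type*} [CommRing A] [CommRing B]

theorem MvPolynomial.homogeneousComponent_ofCoeff (n : ℕ) (x : (σ →₀ ℕ) →₀ A) :
    homogeneousComponent n (AddMonoidAlgebra.ofCoeff x : MvPolynomial σ A) =
      AddMonoidAlgebra.ofCoeff (x.filter (·.degree = n)) := by
  ext m
  rw [coeff_homogeneousComponent]
  rfl

noncomputable def layerEval (χ : σ → A) (n : ℕ) : ((σ →₀ ℕ) →₀ A) →ₗ[A] A :=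
  (MvPolynomial.aeval χ).toLinearMap ∘ₗ MvPolynomial.homogeneousComponent n ∘ₗ
    (AddMonoidAlgebra.coeffLinearEquiv A : MvPolynomial σ A ≃ₗ[A] _).symm.toLinearMap

theorem layerEval_apply (χ : σ → A) (n : ℕ) (x : (σ →₀ ℕ) →₀ A) :
    layerEval χ n x =
      MvPolynomial.eval χ (AddMonoidAlgebra.ofCoeff (x.filter (·.degree = n))) := by
  rw [← MvPolynomial.homogeneousComponent_ofCoeff]
  rfl

theorem layerEval_mapRange (φ : A →+* B) (χ : σ → A) (n : ℕ) (x : (σ →₀ ℕ) →₀ A) :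
    layerEval (φ ∘ χ) n (x.mapRange φ (map_zero φ)) = φ (layerEval χ n x) := by
  have hmap : AddMonoidAlgebra.ofCoeff ((x.mapRange φ (map_zero φ)).filter (·.degree = n)) =
      MvPolynomial.map φ (AddMonoidAlgebra.ofCoeff (x.filter (·.degree = n))) := by
    ext m
    rw [MvPolynomial.coeff_map]
    change ((x.mapRange φ _).filter _) m = φ ((x.filter _) m)
    rw [filter_apply, filter_apply, mapRange_apply, apply_ite φ, map_zero]
  rw [layerEval_apply, layerEval_apply, hmap, MvPolynomial.eval_map, MvPolynomial.eval₂_comp]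

end LayerEval

section PBW

variable {ι : Type} [Fintype ι] [LinearOrder ι]

section Field

variable {F : Type} [Field F] {M : Type v} [AddCommGroup M] [Module F M]
  (f : ι → Module.End F M) (v : M)

noncomputable def pbwEval : ((ι →₀ ℕ) →₀ F) →ₗ[F] M :=
  linearCombination F fun m => monAct f m v

theorem filtLow_eq (n : ℕ) :
    filtLow f v n = (supported F F {m | m.degree < n}).map (pbwEval f v) := by
  cases n with
  | zero => simp [filtLow]
  | succ n =>
    rw [filtLow, pbwEval, ← span_image_eq_map_linearCombination]
    congr 1
    ext u
    simp only [Nat.lt_succ_iff, Set.mem_ofPred_eq, Set.mem_image, eq_comm (a := u)]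
    rfl

theorem pbwEval_filter (P : (ι →₀ ℕ) → Prop) [DecidablePred P] (e : (ι →₀ ℕ) →₀ F) :
    pbwEval f v (e.filter P) = ∑ m ∈ e.support.filter P, e m • monAct f m v := by
  rw [pbwEval, linearCombination_apply, sum_filter_index]
  rfl

theorem annMem_iff (s : MvPolynomial ι F) :
    annMem f v s ↔ ∀ n,
      pbwEval f v ((AddMonoidAlgebra.coeff s).filter (·.degree = n)) ∈ filtLow f v n := by
  simp only [pbwEval_filter]
  rfl

theorem exists_relation_of_annMem {s : MvPolynomial ι F} (hs : annMem f v s) (n : ℕ) :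
    ∃ D : (ι →₀ ℕ) →₀ F, pbwEval f v D = 0 ∧ D ∈ supported F F {m | m.degree ≤ n} ∧
      D.filter (·.degree = n) = (AddMonoidAlgebra.coeff s).filter (·.degree = n) := by
  set top := (AddMonoidAlgebra.coeff s).filter (·.degree = n)
  obtain ⟨d, hd, hdw⟩ := Submodule.mem_map.mp (filtLow_eq f v n ▸ (annMem_iff f v s).mp hs n)
  refine ⟨top - d, by rw [map_sub, hdw, sub_self], ?_, ?_⟩
  · have hd' : d ∈ supported F F {m | m.degree ≤ n} := by
      refine supported_mono ?_ hd
      intro m (hm : m.degree < n)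
      exact hm.le
    refine sub_mem ((mem_supported' _ _).mpr fun m hm => filter_apply_neg _ _ ?_) hd'
    exact fun h => hm (le_of_eq h)
  · ext m
    rw [filter_apply]
    split_ifs with h
    · rw [Finsupp.sub_apply, (mem_supported' _ _).mp hd m (by simp [h]), sub_zero]
    · exact (filter_apply_neg (fun m : ι →₀ ℕ => m.degree = n) _ h).symm

end Field

section RForm

variable (R : Subring ℚ) {M : Type v} [AddCommGroup M] [Module ℂ M]
  (f : ι → Module.End ℂ M) (v : M)

noncomputable def pbwEvalR : ((ι →₀ ℕ) →₀ R) →+ M :=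
  (pbwEval f v).toAddMonoidHom.comp
    (mapRange.addMonoidHom ((Rat.castHom ℂ).comp R.subtype).toAddMonoidHom)

theorem pbwEvalR_apply (e : (ι →₀ ℕ) →₀ R) :
    pbwEvalR R f v e = e.sum fun m c => ratToC c • monAct f m v := by
  simp only [pbwEvalR, pbwEval, AddMonoidHom.coe_comp, Function.comp_apply,
    mapRange.addMonoidHom_apply, LinearMap.toAddMonoidHom_coe, linearCombination_apply]
  exact sum_mapRange_index fun _ => zero_smul _ _

theorem mem_filtRLow {n : ℕ} {x : M} :
    x ∈ filtRLow R f v n ↔ ∃ e ∈ supported R R {m | m.degree < n}, pbwEvalR R f v e = x := by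
  cases n with
  | zero => simp [filtRLow, eq_comm]
  | succ n =>
    constructor
    · intro hx
      induction hx using AddSubgroup.closure_induction with
      | mem u hu =>
        obtain ⟨c, m, hm, rfl⟩ := hu
        refine ⟨single m c, single_mem_supported R c (Nat.lt_succ_of_le hm), ?_⟩
        rw [pbwEvalR_apply, sum_single_index (by simp [ratToC])]
      | zero => exact ⟨0, zero_mem _, map_zero _⟩
      | add x y _ _ hx hy =>
        obtain ⟨e₁, h₁, rfl⟩ := hx
        obtain ⟨e₂, h₂, rfl⟩ := hy
        exact ⟨e₁ + e₂, add_mem h₁ h₂, map_add _ _ _⟩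
      | neg x _ hx =>
        obtain ⟨e, he, rfl⟩ := hx
        exact ⟨-e, neg_mem he, map_neg _ _⟩
    · rintro ⟨e, he, rfl⟩
      rw [pbwEvalR_apply]
      refine AddSubgroup.sum_mem _ fun m hm => AddSubgroup.subset_closure ⟨e m, m, ?_, rfl⟩
      exact Nat.lt_succ_iff.mp (he hm)

theorem annMemR_iff (s : MvPolynomial ι R) :
    annMemR R f v s ↔ ∀ n,
      pbwEvalR R f v ((AddMonoidAlgebra.coeff s).filter (·.degree = n)) ∈ filtRLow R f v n := by
  simp only [pbwEvalR_apply, sum_filter_index]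
  rfl

/-- Assumption (R2): `S(𝔤_R) ⧸ Ann_{S(𝔤_R)}(v)` has no `R`-torsion. -/
def AnnQuotientTorsionFree : Prop :=
  ∀ c : R, c ≠ 0 → ∀ s : MvPolynomial ι R, annMemR R f v (MvPolynomial.C c * s) → annMemR R f v s

variable {R f v}

theorem annMemR_ofCoeff_iff {n : ℕ} {x : (ι →₀ ℕ) →₀ R}
    (hx : x ∈ supported R R {m | m.degree = n}) :
    annMemR R f v (AddMonoidAlgebra.ofCoeff x) ↔ pbwEvalR R f v x ∈ filtRLow R f v n := by
  rw [mem_supported'] at hx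
  have hxn : x.filter (·.degree = n) = x :=
    (filter_eq_self_iff _ _).mpr fun m hm => not_not.mp (mt (hx m) hm)
  rw [annMemR_iff, AddMonoidAlgebra.coeff_ofCoeff]
  refine ⟨fun h => hxn ▸ h n, fun h k => ?_⟩
  by_cases hk : k = n
  · rwa [hk, hxn]
  · rw [(filter_eq_zero_iff _ _).mpr fun m (hm : m.degree = k) => hx m fun h => hk (hm ▸ h),
      map_zero]
    exact zero_mem _

theorem annMemR_topLayer {n : ℕ} {e : (ι →₀ ℕ) →₀ R} (he : pbwEvalR R f v e = 0)
    (hdeg : e ∈ supported R R {m | m.degree ≤ n}) :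
    annMemR R f v (AddMonoidAlgebra.ofCoeff (e.filter (·.degree = n))) := by
  rw [mem_supported'] at hdeg
  have htop : e.filter (·.degree = n) ∈ supported R R {m | m.degree = n} :=
    (mem_supported' _ _).mpr fun m hm => filter_apply_neg _ _ hm
  have hlow : e.filter (fun m => ¬m.degree = n) ∈ supported R R {m | m.degree < n} := by
    refine (mem_supported' _ _).mpr fun m hm => ?_
    by_cases hmn : m.degree = n
    · exact filter_apply_neg (fun m => ¬m.degree = n) e (not_not.mpr hmn)
    · rw [filter_apply_pos (fun m => ¬m.degree = n) e hmn]
      exact hdeg m fun h => hm (lt_of_le_of_ne h hmn)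
  rw [annMemR_ofCoeff_iff htop, mem_filtRLow]
  refine ⟨-e.filter (fun m => ¬m.degree = n), neg_mem hlow, ?_⟩
  rw [map_neg, neg_eq_iff_add_eq_zero, add_comm, ← map_add, filter_add_filter_not, he]

theorem filtRLow_le_filtLow (n : ℕ) : ∀ x ∈ filtRLow R f v n, x ∈ filtLow f v n := by
  intro x hx
  obtain ⟨e, he, rfl⟩ := (mem_filtRLow R f v).mp hx
  rw [filtLow_eq]
  refine ⟨_, (mem_supported' _ _).mpr fun m hm => ?_, rfl⟩
  simp [(mem_supported' _ _).mp he m hm]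

theorem eval_eq_zero_of_annMemR (χ : ι → R)
    (hχ : ∀ s : MvPolynomial ι ℂ, annMem f v s → MvPolynomial.eval (fun i => ratToC (χ i)) s = 0)
    {P : MvPolynomial ι R} (hP : annMemR R f v P) : MvPolynomial.eval χ P = 0 := by
  set ι₀ : R →+* ℂ := (Rat.castHom ℂ).comp R.subtype
  have hι₀ : Function.Injective ι₀ := Rat.cast_injective.comp Subtype.val_injective
  have hmap : annMem f v (MvPolynomial.map ι₀ P) := by
    rw [annMem_iff]
    intro n
    convert filtRLow_le_filtLow n _ ((annMemR_iff R f v P).mp hP n) using 1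
    refine congrArg (pbwEval f v) (ext fun m => ?_)
    rw [mapRange.addMonoidHom_apply, mapRange_apply, filter_apply, filter_apply]
    split_ifs
    · exact MvPolynomial.coeff_map ι₀ P m
    · exact (map_zero ι₀).symm
  rw [← map_eq_zero_iff ι₀ hι₀, MvPolynomial.eval₂_comp, ← MvPolynomial.eval_map]
  exact hχ _ hmap

end RForm

section Descent

variable {K : Type} [Field K] {R : Subring ℚ} (φ : R →+* K)
  {M : Type v} [AddCommGroup M] [Module ℂ M] {f : ι → Module.End ℂ M} {v : M}

/-- Torsion-freeness (R2) lets one divide the top layer of a relation by `p` when it reduces to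
zero, and trade it for terms of lower degree. -/
theorem exists_relation_lowerDegree {p : ℕ} [Fact p.Prime] [CharP K p]
    (hR2 : AnnQuotientTorsionFree R f v) {N : ℕ}
    {e : (ι →₀ ℕ) →₀ R} (he : pbwEvalR R f v e = 0)
    (hdeg : e ∈ supported R R {m | m.degree ≤ N + 1})
    (htop : ∀ m, m.degree = N + 1 → φ (e m) = 0) :
    ∃ e' : (ι →₀ ℕ) →₀ R, pbwEvalR R f v e' = 0 ∧ e' ∈ supported R R {m | m.degree ≤ N} ∧
      e'.mapRange φ (map_zero φ) = e.mapRange φ (map_zero φ) := by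
  classical
  have hp0 : (p : R) ≠ 0 := Nat.cast_ne_zero.mpr (Fact.out : p.Prime).ne_zero
  obtain ⟨u, hu⟩ : ∃ u, e.filter (·.degree = N + 1) = (p : R) • u :=
    exists_eq_smul_of_forall_dvd fun m => by
      by_cases hm : m.degree = N + 1
      · rw [filter_apply_pos (·.degree = N + 1) e hm]
        exact Dvd.intro _ (exists_eq_mul_of_map_eq_zero φ (htop m hm)).choose_spec.symm
      · rw [filter_apply_neg (·.degree = N + 1) e hm]
        exact dvd_zero _
  have hu_hom : u ∈ supported R R {m | m.degree = N + 1} := by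
    refine (mem_supported' _ _).mpr fun m hm => ?_
    have : (p : R) * u m = 0 := by
      rw [← smul_eq_mul, ← Finsupp.smul_apply, ← hu]
      exact filter_apply_neg (fun m : ι →₀ ℕ => m.degree = N + 1) e hm
    exact (mul_eq_zero.mp this).resolve_left hp0
  have hann : annMemR R f v (AddMonoidAlgebra.ofCoeff u) := by
    refine hR2 _ hp0 _ ?_
    rw [MvPolynomial.C_mul', ← AddMonoidAlgebra.ofCoeff_smul, ← hu]
    exact annMemR_topLayer he hdeg
  obtain ⟨y, hy, hyu⟩ := (mem_filtRLow R f v).mp ((annMemR_ofCoeff_iff hu_hom).mp hann)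
  refine ⟨e - e.filter (·.degree = N + 1) + (p : R) • y, ?_, ?_, ?_⟩
  · rw [map_add, map_sub, he, hu, Nat.cast_smul_eq_nsmul, Nat.cast_smul_eq_nsmul, map_nsmul,
      map_nsmul, hyu, zero_sub, neg_add_cancel]
  · refine add_mem ((mem_supported' _ _).mpr fun m hm => ?_) (Submodule.smul_mem _ _ ?_)
    · rw [Finsupp.sub_apply, filter_apply]
      split_ifs with htop
      · exact sub_self _
      · refine ((mem_supported' _ _).mp hdeg m ?_).symm ▸ sub_zero _
        simp only [Set.mem_ofPred_eq, not_le] at hm ⊢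
        omega
    · exact supported_mono (fun m hm => Nat.lt_succ_iff.mp hm) hy
  · rw [mapRange_add (map_add φ), mapRange_sub (map_sub φ), hu, mapRange_natCast_smul_eq_zero,
      mapRange_natCast_smul_eq_zero, sub_zero, add_zero]

theorem exists_relation_supported_of_mapRange_supported {p : ℕ} [Fact p.Prime] [CharP K p]
    (hR2 : AnnQuotientTorsionFree R f v) {n : ℕ} {e : (ι →₀ ℕ) →₀ R} (he : pbwEvalR R f v e = 0)
    (hφe : e.mapRange φ (map_zero φ) ∈ supported K K {m | m.degree ≤ n}) :
    ∃ e' : (ι →₀ ℕ) →₀ R, pbwEvalR R f v e' = 0 ∧ e' ∈ supported R R {m | m.degree ≤ n} ∧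
      e'.mapRange φ (map_zero φ) = e.mapRange φ (map_zero φ) := by
  obtain ⟨N, hN⟩ : ∃ N, e ∈ supported R R {m | m.degree ≤ N} :=
    ⟨e.support.sup degree, by
      rw [mem_supported]
      exact fun m hm => Finset.le_sup (f := degree) hm⟩
  induction N generalizing e with
  | zero => exact ⟨e, he, supported_mono (fun m hm => le_trans hm (Nat.zero_le n)) hN, rfl⟩
  | succ N ih =>
    by_cases hNn : N + 1 ≤ n
    · exact ⟨e, he, supported_mono (fun m hm => le_trans hm hNn) hN, rfl⟩
    obtain ⟨e₁, he₁, hN₁, hφ₁⟩ := exists_relation_lowerDegree (p := p) φ hR2 he hN fun m hm => by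
      simpa using (mem_supported' _ _).mp hφe m (by simp only [Set.mem_ofPred_eq]; omega)
    obtain ⟨e', he', hn', hφ'⟩ := ih he₁ (hφ₁ ▸ hφe) hN₁
    exact ⟨e', he', hn', hφ'.trans hφ₁⟩

theorem mem_span_reductions_of_supported {p : ℕ} [Fact p.Prime] [CharP K p]
    (hpR : ¬IsUnit (p : R)) (hR2 : AnnQuotientTorsionFree R f v) {n : ℕ} {D : (ι →₀ ℕ) →₀ K}
    (hD : D ∈ Submodule.span K
      {d | ∃ e : (ι →₀ ℕ) →₀ R, pbwEvalR R f v e = 0 ∧ d = e.mapRange φ (map_zero φ)})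
    (hDn : D ∈ supported K K {m | m.degree ≤ n}) :
    D ∈ Submodule.span K {d | ∃ e : (ι →₀ ℕ) →₀ R, pbwEvalR R f v e = 0 ∧
      e ∈ supported R R {m | m.degree ≤ n} ∧ d = e.mapRange φ (map_zero φ)} := by
  let _ := ZMod.algebra K p
  let Φ : Submodule (ZMod p) ((ι →₀ ℕ) →₀ K) :=
    { carrier := {d | ∃ e : (ι →₀ ℕ) →₀ R, pbwEvalR R f v e = 0 ∧ d = e.mapRange φ (map_zero φ)}
      add_mem' := by
        rintro _ _ ⟨e₁, h₁, rfl⟩ ⟨e₂, h₂, rfl⟩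
        exact ⟨e₁ + e₂, by rw [map_add, h₁, h₂, add_zero], (mapRange_add (map_add φ) _ _).symm⟩
      zero_mem' := ⟨0, map_zero _, mapRange_zero.symm⟩
      smul_mem' := by
        rintro z _ ⟨e, he, rfl⟩
        refine ⟨z.val • e, by rw [map_nsmul, he, smul_zero], ext fun m => ?_⟩
        rw [Finsupp.smul_apply, mapRange_apply, mapRange_apply, Finsupp.smul_apply, map_nsmul,
          Algebra.smul_def, nsmul_eq_mul, ← map_natCast (algebraMap (ZMod p) K),
          ZMod.natCast_zmod_val] }
  have hΦ : ∀ x ∈ Φ, ∀ m, x m ∈ (algebraMap (ZMod p) K).range := by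
    rintro _ ⟨e, -, rfl⟩ m
    exact map_mem_range_algebraMap hpR φ (e m)
  refine Submodule.span_mono ?_ (mem_span_supported_of_mem_span Φ hΦ hD hDn)
  rintro _ ⟨⟨e, he, rfl⟩, hsupp⟩
  obtain ⟨e', he', hsupp', heq⟩ :=
    exists_relation_supported_of_mapRange_supported (p := p) φ hR2 he hsupp
  exact ⟨e', he', hsupp', heq.symm⟩

theorem layerEval_eq_zero_of_mem_span (χ : ι → R)
    (hχ : ∀ s : MvPolynomial ι ℂ, annMem f v s → MvPolynomial.eval (fun i => ratToC (χ i)) s = 0)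
    {n : ℕ} {D : (ι →₀ ℕ) →₀ K}
    (hD : D ∈ Submodule.span K {d | ∃ e : (ι →₀ ℕ) →₀ R, pbwEvalR R f v e = 0 ∧
      e ∈ supported R R {m | m.degree ≤ n} ∧ d = e.mapRange φ (map_zero φ)}) :
    layerEval (φ ∘ χ) n D = 0 := by
  refine (Submodule.span_le (p := LinearMap.ker (layerEval (φ ∘ χ) n))).mpr ?_ hD
  rintro _ ⟨e, he, hn, rfl⟩
  rw [SetLike.mem_coe, LinearMap.mem_ker, layerEval_mapRange, layerEval_apply,
    eval_eq_zero_of_annMemR χ hχ (annMemR_topLayer he hn), map_zero]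

end Descent

end PBW

theorem statement13_general {K : Type} [Field K] {p : ℕ} [Fact p.Prime]
    [CharP K p]
    -- R = 𝒮⁻¹ℤ ⊆ ℚ with p not invertible in R, and the reduction map φ : R → 𝕂
    (R : Subring ℚ) (hpR : ¬ IsUnit (p : R)) (φ : R →+* K)
    -- the Chevalley basis ℬ of 𝔤_ℂ, of size k, with structure constants c over R
    (k : ℕ)
    -- the simple highest weight module L_ℂ(λ): fC i is the action of the basis vector bᵢ
    (LC : Type) [AddCommGroup LC] [Module ℂ LC] (fC : Fin k → Module.End ℂ LC)
    (v : LC)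
    -- L_p(λ) = L_R(λ) ⊗_R 𝕂, with generator w̄_λ and action fK of the reduced basis
    (LK : Type) [AddCommGroup LK] [Module K LK] (fK : Fin k → Module.End K LK)
    (w : LK)
    -- base change: the 𝕂-linear relations among the PBW monomials applied to w̄_λ are
    -- spanned by the reductions of the R-linear relations among those applied to v̄_λ
    (hBC : ∀ d : (Fin k →₀ ℕ) →₀ K,
      (d.sum fun m cc => cc • monAct fK m w) = 0 ↔
      d ∈ Submodule.span K
        {d' | ∃ e : (Fin k →₀ ℕ) →₀ R,
          (e.sum fun m cR => ratToC cR • monAct fC m v) = 0 ∧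
          d' = e.mapRange (fun cR => φ cR) (map_zero φ)})
    -- assumption (R2(λ)): S(𝔤_R)/Ann_{S(𝔤_R)}(v̄_λ) has no R-torsion
    (hR2 : ∀ cR : R, cR ≠ 0 → ∀ s : MvPolynomial (Fin k) R,
      annMemR R fC v (MvPolynomial.C cR * s) → annMemR R fC v s)
    -- χ : 𝔤_R → R, via its values on the basis, assumed to lie in 𝒱_{𝔤_ℂ} L_ℂ(λ)
    (χ : Fin k → R)
    (hχ : ∀ s : MvPolynomial (Fin k) ℂ, annMem fC v s →
      MvPolynomial.eval (fun i => ratToC (χ i)) s = 0) :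
    -- conclusion: χ ⊗ 1 lies in 𝒱_{𝔤_𝕂} L_p(λ)
    ∀ s : MvPolynomial (Fin k) K, annMem fK w s →
      MvPolynomial.eval (fun i => φ (χ i)) s = 0 := by
  intro s hs
  rw [← MvPolynomial.sum_homogeneousComponent s, map_sum]
  refine Finset.sum_eq_zero fun n _ => ?_
  obtain ⟨D, hD, hDn, hlayer⟩ := exists_relation_of_annMem fK w hs n
  have hrel : D ∈ Submodule.span K
      {d | ∃ e : (Fin k →₀ ℕ) →₀ R, pbwEvalR R fC v e = 0 ∧ d = e.mapRange φ (map_zero φ)} := by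
    simp only [pbwEvalR_apply]
    exact (hBC D).mp (by rwa [← linearCombination_apply])
  calc MvPolynomial.eval (φ ∘ χ) (MvPolynomial.homogeneousComponent n s)
      = layerEval (φ ∘ χ) n D := by
        rw [layerEval_apply, hlayer, ← MvPolynomial.homogeneousComponent_ofCoeff]
    _ = 0 := layerEval_eq_zero_of_mem_span φ χ hχ
        (mem_span_reductions_of_supported φ hpR hR2 hrel hDn)

/-- Proposition 3.7: if `χ ∈ 𝒱_{𝔤_ℂ} L_ℂ(λ)` then
`χ ⊗ 1 ∈ 𝒱_{𝔤_𝕂} L_p(λ)`, assuming (R2(λ)). -/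
theorem statement13 {K : Type} [Field K] [IsAlgClosed K] {p : ℕ} [Fact p.Prime]
    [CharP K p]
    -- R = 𝒮⁻¹ℤ ⊆ ℚ with p not invertible in R, and the reduction map φ : R → 𝕂
    (R : Subring ℚ) (hpR : ¬ IsUnit (p : R)) (φ : R →+* K)
    -- the Chevalley basis ℬ of 𝔤_ℂ, of size k, with structure constants c over R
    (k : ℕ) (c : Fin k → Fin k → Fin k → R)
    -- the simple highest weight module L_ℂ(λ): fC i is the action of the basis vector bᵢ
    (LC : Type) [AddCommGroup LC] [Module ℂ LC] (fC : Fin k → Module.End ℂ LC)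
    (hCbr : ∀ i j, fC i * fC j - fC j * fC i = ∑ l, ratToC (c i j l) • fC l)
    (v : LC) (hv0 : v ≠ 0)
    -- highest-weight data: positive-part indices kill v, Cartan indices act via λ ∈ 𝔱_R*
    (posIdx cartIdx : Finset (Fin k)) (lam : Fin k → R)
    (hw_pos : ∀ i ∈ posIdx, fC i v = 0)
    (hw_cart : ∀ i ∈ cartIdx, fC i v = ratToC (lam i) • v)
    (hsimple : ∀ W : Submodule ℂ LC, (∀ i, ∀ u ∈ W, fC i u ∈ W) → W = ⊥ ∨ W = ⊤)
    -- L_p(λ) = L_R(λ) ⊗_R 𝕂, with generator w̄_λ and action fK of the reduced basis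
    (LK : Type) [AddCommGroup LK] [Module K LK] (fK : Fin k → Module.End K LK)
    (hKbr : ∀ i j, fK i * fK j - fK j * fK i = ∑ l, φ (c i j l) • fK l)
    (w : LK)
    (hKgen : Submodule.span K {u | ∃ m : Fin k →₀ ℕ, u = monAct fK m w} = ⊤)
    -- base change: the 𝕂-linear relations among the PBW monomials applied to w̄_λ are
    -- spanned by the reductions of the R-linear relations among those applied to v̄_λ
    (hBC : ∀ d : (Fin k →₀ ℕ) →₀ K,
      (d.sum fun m cc => cc • monAct fK m w) = 0 ↔
      d ∈ Submodule.span K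
        {d' | ∃ e : (Fin k →₀ ℕ) →₀ R,
          (e.sum fun m cR => ratToC cR • monAct fC m v) = 0 ∧
          d' = e.mapRange (fun cR => φ cR) (map_zero φ)})
    -- assumption (R2(λ)): S(𝔤_R)/Ann_{S(𝔤_R)}(v̄_λ) has no R-torsion
    (hR2 : ∀ cR : R, cR ≠ 0 → ∀ s : MvPolynomial (Fin k) R,
      annMemR R fC v (MvPolynomial.C cR * s) → annMemR R fC v s)
    -- χ : 𝔤_R → R, via its values on the basis, assumed to lie in 𝒱_{𝔤_ℂ} L_ℂ(λ)
    (χ : Fin k → R)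
    (hχ : ∀ s : MvPolynomial (Fin k) ℂ, annMem fC v s →
      MvPolynomial.eval (fun i => ratToC (χ i)) s = 0) :
    -- conclusion: χ ⊗ 1 lies in 𝒱_{𝔤_𝕂} L_p(λ)
    ∀ s : MvPolynomial (Fin k) K, annMem fK w s →
      MvPolynomial.eval (fun i => φ (χ i)) s = 0 :=
  statement13_general R hpR φ k LC fC v LK fK w hBC hR2 χ hχ
end
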